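/- With the notation of the multi-group multi-patch model and assuming M_{hv} M_{vh} is irreducible, the basic reproduction number satisfies min_{j=1,…,m} L_j^⋄ ≤ R_0²(n,m) ≤ max_{j=1,…,m} L_j^⋄, where L_j^⋄ = (a_j β_{hv} β_{vh} /((μ_v+δ_j) ∑_{l=1}^n p_{lj} N_{h,l})) ∑_{k=1}^n (p_{kj} N_{h,k}/(μ_k+γ_k)) (∑_{i=1}^m a_i p_{ki} N_{v,i} / ∑_{l=1}^n p_{li} N_{h,l}), obtained by bounding ρ(M_{hv} M_{vh}) by its column sums. -/

import Mathlib

noncomputable def specRad {ι : Type*} [Fintype ι] [DecidableEq ι] (A : Matrix ι ι ℝ) : ℝ :=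
  sSup ((fun z : ℂ => ‖z‖) '' spectrum ℂ (A.map ((↑) : ℝ → ℂ)))

def MatIrreducible {ι : Type*} [Fintype ι] [DecidableEq ι] (A : Matrix ι ι ℝ) : Prop :=
  ∀ i j : ι, ∃ k : ℕ, 0 < k ∧ 0 < (A ^ k) i j

/-!
The spectral radius is bounded by the `ℓ^∞` operator norm, i.e. by the largest row sum. Conversely,
if a nonnegative matrix has all row sums `≥ c ≥ 0`, then so does its `k`-th power with `c ^ k`,
so `‖A ^ k‖ ≥ c ^ k` and Gelfand's formula gives `ρ(A) ≥ c`. As `A` and `Aᵀ` have the same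
spectrum, both bounds also hold with column sums, and the column sums of `M_{hv} M_{vh}` are
exactly the numbers `L_j^⋄`.
-/

open Matrix Finset
open scoped NNReal ENNReal

attribute [local instance] Matrix.linftyOpNormedAddCommGroup Matrix.linftyOpNormedRing
  Matrix.linftyOpNormedAlgebra

theorem Matrix.spectrum_transpose {R ι : Type*} [CommRing R] [Fintype ι] [DecidableEq ι]
    (A : Matrix ι ι R) : spectrum R Aᵀ = spectrum R A := by
  ext z
  have h : (algebraMap R (Matrix ι ι R) z - A)ᵀ = algebraMap R (Matrix ι ι R) z - Aᵀ := by
    rw [transpose_sub, algebraMap_eq_diagonal, diagonal_transpose]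
  simp only [spectrum.mem_iff, isUnit_iff_isUnit_det, ← h, det_transpose]

section LinftyOpNorm

variable {κ ι : Type*} [Fintype κ] [Fintype ι]

theorem Matrix.sum_le_linfty_opNorm (A : Matrix κ ι ℝ) (i : κ) : ∑ j, A i j ≤ ‖A‖ := by
  rw [linfty_opNorm_def]
  calc ∑ j, A i j ≤ ∑ j, ‖A i j‖ := sum_le_sum fun j _ => le_abs_self _
    _ = ((∑ j, ‖A i j‖₊ : ℝ≥0) : ℝ) := by push_cast; rfl
    _ ≤ _ := NNReal.coe_le_coe.mpr (le_sup (f := fun i => ∑ j, ‖A i j‖₊) (mem_univ i))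

theorem Matrix.linfty_opNorm_le_iSup_sum {A : Matrix κ ι ℝ} (hA : ∀ i j, 0 ≤ A i j) :
    ‖A‖ ≤ ⨆ i, ∑ j, A i j := by
  have hS : 0 ≤ ⨆ i, ∑ j, A i j := Real.iSup_nonneg fun i => sum_nonneg fun j _ => hA i j
  rw [linfty_opNorm_def, ← NNReal.coe_mk _ hS, NNReal.coe_le_coe]
  refine Finset.sup_le fun i _ => ?_
  rw [← NNReal.coe_le_coe, NNReal.coe_mk, NNReal.coe_sum]
  calc ∑ j, ‖A i j‖ = ∑ j, A i j := sum_congr rfl fun j _ => Real.norm_of_nonneg (hA i j)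
    _ ≤ ⨆ i, ∑ j, A i j := le_ciSup (f := fun i => ∑ j, A i j) (Finite.bddAbove_range _) i

theorem Matrix.linfty_opNorm_map_ofReal (A : Matrix κ ι ℝ) :
    ‖A.map ((↑) : ℝ → ℂ)‖ = ‖A‖ := by
  simp only [linfty_opNorm_def, map_apply, Complex.nnnorm_real]

end LinftyOpNorm

section SpectralBounds

variable {ι : Type*} [Fintype ι] [DecidableEq ι]

theorem Matrix.pow_le_sum_pow_apply {A : Matrix ι ι ℝ} (hA : ∀ i j, 0 ≤ A i j) {c : ℝ}
    (hc : 0 ≤ c) (hrow : ∀ i, c ≤ ∑ j, A i j) (k : ℕ) (i : ι) : c ^ k ≤ ∑ j, (A ^ k) i j := by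
  induction k generalizing i with
  | zero => simp [one_apply]
  | succ k ih =>
    calc c ^ (k + 1) = c * c ^ k := pow_succ' c k
      _ ≤ (∑ l, A i l) * c ^ k := mul_le_mul_of_nonneg_right (hrow i) (pow_nonneg hc k)
      _ = ∑ l, A i l * c ^ k := sum_mul _ _ _
      _ ≤ ∑ l, A i l * ∑ j, (A ^ k) l j :=
        sum_le_sum fun l _ => mul_le_mul_of_nonneg_left (ih l) (hA i l)
      _ = ∑ j, (A ^ (k + 1)) i j := by
        simp only [pow_succ', mul_apply, mul_sum]
        exact sum_comm

theorem specRad_transpose (A : Matrix ι ι ℝ) : specRad Aᵀ = specRad A := by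
  rw [specRad, specRad, transpose_map, spectrum_transpose]

theorem specRad_eq_toReal_spectralRadius [Nonempty ι] (A : Matrix ι ι ℝ) :
    specRad A = (spectralRadius ℂ (A.map ((↑) : ℝ → ℂ))).toReal := by
  rw [specRad]
  set C := A.map ((↑) : ℝ → ℂ)
  obtain ⟨z₀, hz₀, hrad⟩ := spectrum.exists_nnnorm_eq_spectralRadius C
  have hgreatest : IsGreatest ((fun z : ℂ => ‖z‖) '' spectrum ℂ C) ‖z₀‖ := by
    refine ⟨⟨z₀, hz₀, rfl⟩, ?_⟩
    rintro _ ⟨z, hz, rfl⟩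
    have hle : (‖z‖₊ : ℝ≥0∞) ≤ ‖z₀‖₊ :=
      hrad ▸ le_iSup₂ (f := fun (k : ℂ) (_ : k ∈ spectrum ℂ C) => (‖k‖₊ : ℝ≥0∞)) z hz
    exact_mod_cast hle
  rw [hgreatest.csSup_eq, ← hrad, ENNReal.coe_toReal, coe_nnnorm]

theorem specRad_le_iSup_sum_row [Nonempty ι] {A : Matrix ι ι ℝ} (hA : ∀ i j, 0 ≤ A i j) :
    specRad A ≤ ⨆ i, ∑ j, A i j := by
  rw [specRad_eq_toReal_spectralRadius]
  refine ENNReal.toReal_le_of_le_ofReal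
    (Real.iSup_nonneg fun i => sum_nonneg fun j _ => hA i j) ?_
  refine (spectrum.spectralRadius_le_nnnorm _).trans ?_
  rw [← ENNReal.ofReal_coe_nnreal, coe_nnnorm, linfty_opNorm_map_ofReal]
  exact ENNReal.ofReal_le_ofReal (linfty_opNorm_le_iSup_sum hA)

theorem iInf_sum_row_le_specRad [Nonempty ι] {A : Matrix ι ι ℝ} (hA : ∀ i j, 0 ≤ A i j) :
    ⨅ i, ∑ j, A i j ≤ specRad A := by
  set c := ⨅ i, ∑ j, A i j
  set C := A.map ((↑) : ℝ → ℂ)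
  have hc : 0 ≤ c := Real.iInf_nonneg fun i => sum_nonneg fun j _ => hA i j
  have hrow (i : ι) : c ≤ ∑ j, A i j := ciInf_le (Finite.bddBelow_range _) i
  have hpow (k : ℕ) : c ^ k ≤ ‖C ^ k‖ := by
    have hmap : C ^ k = (A ^ k).map (↑) := (A.map_pow Complex.ofRealHom k).symm
    rw [hmap, linfty_opNorm_map_ofReal]
    obtain ⟨i⟩ := ‹Nonempty ι›
    exact (pow_le_sum_pow_apply hA hc hrow k i).trans (sum_le_linfty_opNorm _ i)
  have hgelfand : ENNReal.ofReal c ≤ spectralRadius ℂ C := by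
    refine ge_of_tendsto (spectrum.pow_nnnorm_pow_one_div_tendsto_nhds_spectralRadius C) ?_
    filter_upwards [Filter.eventually_gt_atTop 0] with k hk
    rw [one_div, ENNReal.le_rpow_inv_iff (by positivity), ENNReal.rpow_natCast,
      ← ENNReal.ofReal_pow hc, ← ENNReal.ofReal_coe_nnreal, coe_nnnorm]
    exact ENNReal.ofReal_le_ofReal (hpow k)
  have hfinite : spectralRadius ℂ C ≠ ⊤ :=
    ((spectrum.spectralRadius_le_nnnorm C).trans_lt ENNReal.coe_lt_top).ne
  rw [specRad_eq_toReal_spectralRadius]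
  exact (ENNReal.ofReal_le_iff_le_toReal hfinite).mp hgelfand

theorem specRad_le_iSup_sum_col [Nonempty ι] {A : Matrix ι ι ℝ} (hA : ∀ i j, 0 ≤ A i j) :
    specRad A ≤ ⨆ j, ∑ i, A i j := by
  simpa only [specRad_transpose, transpose_apply] using
    specRad_le_iSup_sum_row (A := Aᵀ) fun i j => hA j i

theorem iInf_sum_col_le_specRad [Nonempty ι] {A : Matrix ι ι ℝ} (hA : ∀ i j, 0 ≤ A i j) :
    ⨅ j, ∑ i, A i j ≤ specRad A := by
  simpa only [specRad_transpose, transpose_apply] using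
    iInf_sum_row_le_specRad (A := Aᵀ) fun i j => hA j i

end SpectralBounds
theorem stmt16_general {n m : ℕ} [NeZero m] (βvh βhv μv : ℝ) (a Nv δ : Fin m → ℝ)
    (Nh μ γ : Fin n → ℝ) (p : Fin n → Fin m → ℝ)
    (hβvh : 0 < βvh) (hβhv : 0 < βhv) (hμv : 0 < μv)
    (ha : ∀ j, 0 < a j) (hNv : ∀ j, 0 < Nv j) (hδ : ∀ j, 0 < δ j)
    (hNh : ∀ i, 0 < Nh i) (hμ : ∀ i, 0 < μ i) (hγ : ∀ i, 0 < γ i)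
    (hp : ∀ i j, 0 ≤ p i j)
    (hS : ∀ j, 0 < ∑ l, p l j * Nh l)
    (Mhv : Matrix (Fin m) (Fin n) ℝ)
    (Mvh : Matrix (Fin n) (Fin m) ℝ)
    (hMhv : ∀ j i, Mhv j i = a j * βhv * p i j * Nv j / ((μ i + γ i) * ∑ l, p l j * Nh l))
    (hMvh : ∀ i j, Mvh i j = a j * βvh * p i j * Nh i / ((μv + δ j) * ∑ l, p l j * Nh l)) :
    (⨅ j : Fin m, (a j * βhv * βvh / ((μv + δ j) * ∑ l, p l j * Nh l)) *
        ∑ k, (p k j * Nh k / (μ k + γ k)) *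
          (∑ i, a i * p k i * Nv i / ∑ l, p l i * Nh l))
      ≤ specRad (Mhv * Mvh) ∧
    specRad (Mhv * Mvh) ≤
      ⨆ j : Fin m, (a j * βhv * βvh / ((μv + δ j) * ∑ l, p l j * Nh l)) *
        ∑ k, (p k j * Nh k / (μ k + γ k)) *
          (∑ i, a i * p k i * Nv i / ∑ l, p l i * Nh l) := by
  have hMhv_nonneg (j i) : 0 ≤ Mhv j i := hMhv j i ▸ div_nonneg
    (mul_nonneg (mul_nonneg (mul_nonneg (ha j).le hβhv.le) (hp i j)) (hNv j).le)
    (mul_nonneg (add_pos (hμ i) (hγ i)).le (hS j).le)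
  have hMvh_nonneg (i j) : 0 ≤ Mvh i j := hMvh i j ▸ div_nonneg
    (mul_nonneg (mul_nonneg (mul_nonneg (ha j).le hβvh.le) (hp i j)) (hNh i).le)
    (mul_nonneg (add_pos hμv (hδ j)).le (hS j).le)
  have hnonneg (i j) : 0 ≤ (Mhv * Mvh) i j := by
    rw [mul_apply]
    exact sum_nonneg fun k _ => mul_nonneg (hMhv_nonneg i k) (hMvh_nonneg k j)
  have hcol (j) : ∑ i, (Mhv * Mvh) i j =
      (a j * βhv * βvh / ((μv + δ j) * ∑ l, p l j * Nh l)) *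
        ∑ k, (p k j * Nh k / (μ k + γ k)) * (∑ i, a i * p k i * Nv i / ∑ l, p l i * Nh l) := by
    simp only [mul_apply, hMhv, hMvh, div_eq_mul_inv, mul_inv]
    simp only [mul_sum]
    rw [sum_comm]
    exact sum_congr rfl fun k _ => sum_congr rfl fun i _ => by ring
  simp only [← hcol]
  exact ⟨iInf_sum_col_le_specRad hnonneg, specRad_le_iSup_sum_col hnonneg⟩

theorem stmt16 {n m : ℕ} [NeZero m] (βvh βhv μv : ℝ) (a Nv δ : Fin m → ℝ)
    (Nh μ γ : Fin n → ℝ) (p : Fin n → Fin m → ℝ)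
    (hβvh : 0 < βvh) (hβhv : 0 < βhv) (hμv : 0 < μv)
    (ha : ∀ j, 0 < a j) (hNv : ∀ j, 0 < Nv j) (hδ : ∀ j, 0 < δ j)
    (hNh : ∀ i, 0 < Nh i) (hμ : ∀ i, 0 < μ i) (hγ : ∀ i, 0 < γ i)
    (hp : ∀ i j, 0 ≤ p i j) (hrow : ∀ i, ∑ j, p i j = 1)
    (hS : ∀ j, 0 < ∑ l, p l j * Nh l)
    (Mhv : Matrix (Fin m) (Fin n) ℝ)
    (Mvh : Matrix (Fin n) (Fin m) ℝ)
    (hMhv : ∀ j i, Mhv j i = a j * βhv * p i j * Nv j / ((μ i + γ i) * ∑ l, p l j * Nh l))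
    (hMvh : ∀ i j, Mvh i j = a j * βvh * p i j * Nh i / ((μv + δ j) * ∑ l, p l j * Nh l))
    (hirr : MatIrreducible (Mhv * Mvh)) :
    (⨅ j : Fin m, (a j * βhv * βvh / ((μv + δ j) * ∑ l, p l j * Nh l)) *
        ∑ k, (p k j * Nh k / (μ k + γ k)) *
          (∑ i, a i * p k i * Nv i / ∑ l, p l i * Nh l))
      ≤ specRad (Mhv * Mvh) ∧
    specRad (Mhv * Mvh) ≤
      ⨆ j : Fin m, (a j * βhv * βvh / ((μv + δ j) * ∑ l, p l j * Nh l)) *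
        ∑ k, (p k j * Nh k / (μ k + γ k)) *
          (∑ i, a i * p k i * Nv i / ∑ l, p l i * Nh l) :=
  stmt16_general βvh βhv μv a Nv δ Nh μ γ p hβvh hβhv hμv ha hNv hδ hNh hμ hγ hp hS Mhv Mvh hMhv
    hMvh
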